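/- arXiv:2004.03342 — 4 statements merged into one kernel-verified Lean document; each statement's English description precedes it below -/
import Mathlib

section
/- For any positive integers k and Δ with 3 ≤ k ≤ Δ, and any real numbers x_1, ..., x_k with 1 ≤ x_j ≤ Δ for all j, we have (2/(k-1)) · Σ_{1≤i<j≤k} 1/(x_i + x_j + 2k - 4) ≤ Σ_{j=1}^k 1/(x_j + k). -/
/-! With `a = x i + k` and `b = x j + k`, both at least `4`, each summand obeys
`2 / (a + b - 4) ≤ 1 / a + 1 / b`. Summing over the pairs `i < j`, every index occurs in
exactly `k - 1` pairs, so twice the left-hand sum is at most `(k - 1) * ∑ j, 1 / (x j + k)`. -/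

open Finset

theorem sum_filter_lt_add_eq_card_pred_nsmul {ι M : Type*} [Fintype ι] [LinearOrder ι]
    [AddCommMonoid M] (f : ι → M) :
    ∑ p ∈ univ.filter (fun p : ι × ι => p.1 < p.2), (f p.1 + f p.2)
      = (Fintype.card ι - 1) • ∑ i, f i := by
  have swap_sum : ∑ p ∈ univ.filter (fun p : ι × ι => p.1 < p.2), f p.2
      = ∑ p ∈ univ.filter (fun p : ι × ι => p.2 < p.1), f p.1 :=
    sum_nbij' Prod.swap Prod.swap (by simp) (by simp) (by simp) (by simp) (by simp)
  have off_diag : univ.filter (fun p : ι × ι => p.1 < p.2) ∪ univ.filter (fun p => p.2 < p.1)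
      = univ.filter (fun p => p.2 ≠ p.1) := by
    ext p
    simp only [mem_union, mem_filter, mem_univ, true_and]
    exact lt_or_lt_iff_ne.trans ne_comm
  rw [sum_add_distrib, swap_sum, ← sum_union (disjoint_filter.2 fun p _ h => h.asymm),
    off_diag, sum_filter, Fintype.sum_prod_type, smul_sum]
  refine sum_congr rfl fun i _ => ?_
  rw [← sum_filter, filter_ne']
  simp only [sum_const, card_erase_of_mem (mem_univ i), card_univ]

theorem two_div_add_sub_four_le_inv_add_inv {a b : ℝ} (ha : 4 ≤ a) (hb : 4 ≤ b) :
    2 / (a + b - 4) ≤ 1 / a + 1 / b := by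
  -- after clearing denominators this is `0 ≤ a * (a - 4) + b * (b - 4)`
  rw [div_add_div _ _ (by positivity) (by positivity),
    div_le_div_iff₀ (by linarith) (by positivity)]
  nlinarith

theorem stmt0_general (k Δ : ℕ) (hk : 3 ≤ k) (x : Fin k → ℝ)
    (hx : ∀ j, 1 ≤ x j ∧ x j ≤ (Δ : ℝ)) :
    (2 / ((k : ℝ) - 1)) *
        ∑ p ∈ Finset.univ.filter (fun p : Fin k × Fin k => p.1 < p.2),
          1 / (x p.1 + x p.2 + 2 * (k : ℝ) - 4)
      ≤ ∑ j, 1 / (x j + (k : ℝ)) := by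
  have hk' : (3 : ℝ) ≤ k := by exact_mod_cast hk
  have pair_bound : ∀ p : Fin k × Fin k, 2 * (1 / (x p.1 + x p.2 + 2 * (k : ℝ) - 4))
      ≤ 1 / (x p.1 + k) + 1 / (x p.2 + k) := fun p => by
    have := two_div_add_sub_four_le_inv_add_inv (a := x p.1 + k) (b := x p.2 + k)
      (by linarith [hx p.1]) (by linarith [hx p.2])
    rw [mul_one_div]
    convert this using 3
    ring
  have pair_sum := sum_filter_lt_add_eq_card_pred_nsmul (fun j => 1 / (x j + (k : ℝ)))
  rw [Fintype.card_fin, nsmul_eq_mul, Nat.cast_pred (by omega)] at pair_sum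
  rw [div_mul_eq_mul_div, div_le_iff₀ (by linarith), mul_comm _ ((k : ℝ) - 1), ← pair_sum,
    mul_sum]
  exact sum_le_sum fun p _ => pair_bound p

theorem stmt0 (k Δ : ℕ) (hk : 3 ≤ k) (hkΔ : k ≤ Δ) (x : Fin k → ℝ)
    (hx : ∀ j, 1 ≤ x j ∧ x j ≤ (Δ : ℝ)) :
    (2 / ((k : ℝ) - 1)) *
        ∑ p ∈ Finset.univ.filter (fun p : Fin k × Fin k => p.1 < p.2),
          1 / (x p.1 + x p.2 + 2 * (k : ℝ) - 4)
      ≤ ∑ j, 1 / (x j + (k : ℝ)) :=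
  stmt0_general k Δ hk x hx
end

section
/- For any positive integers k and Δ with 3 ≤ k ≤ Δ, and any real numbers x_1, ..., x_k with 1 ≤ x_j ≤ Δ for all j, we have Σ_{j=1}^k 1/(x_j + k) ≤ 2·(Δ + 2k - 3)/(k² - 1) · Σ_{1≤i<j≤k} 1/(x_i + x_j + 2k - 4). -/
/-!
Put `c = (k + 1) / (2 (Δ + 2k - 3))`. Each pair `i < j` satisfies
`c (1/(x_i + k) + 1/(x_j + k)) ≤ 1/(x_i + x_j + 2k - 4)`, and summing over all pairs counts
every `1/(x_j + k)` exactly `k - 1` times, while `c (k - 1)` is the reciprocal of the constant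
in the theorem. After clearing denominators the pair inequality says that a quadratic polynomial
in `(x_i, x_j)` is nonnegative on the box `[1, Δ]²`; its pure-square part is concave, so it
dominates the bilinear interpolation of its four corner values, all of which are nonnegative.
-/

open Finset

section PairSums

variable {ι M : Type*} [Fintype ι] [AddCommMonoid M]

theorem sum_filter_ne_fst [DecidableEq ι] (g : ι → M) :
    ∑ p ∈ univ.filter (fun p : ι × ι => p.1 ≠ p.2), g p.1
      = (Fintype.card ι - 1) • ∑ i, g i := by
  rw [sum_filter, Fintype.sum_prod_type, smul_sum]
  refine sum_congr rfl fun i _ => ?_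
  rw [← sum_filter, filter_ne]
  simp [card_erase_of_mem]

theorem sum_filter_lt_add [LinearOrder ι] (g : ι → M) :
    ∑ p ∈ univ.filter (fun p : ι × ι => p.1 < p.2), (g p.1 + g p.2)
      = (Fintype.card ι - 1) • ∑ i, g i := by
  have hswap : ∑ p ∈ univ.filter (fun p : ι × ι => p.1 < p.2), g p.2
      = ∑ p ∈ univ.filter (fun p : ι × ι => p.2 < p.1), g p.1 :=
    sum_equiv (Equiv.prodComm ι ι) (by simp) (by simp)
  rw [sum_add_distrib, hswap, ← sum_union (disjoint_filter.2 fun _ _ h => lt_asymm h),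
    ← filter_or, ← sum_filter_ne_fst]
  simp only [ne_iff_lt_or_gt]

end PairSums

theorem polynomial_nonneg_on_box {K D a b : ℝ} (hK : 3 ≤ K) (ha : 1 ≤ a) (ha' : a ≤ D)
    (hb : 1 ≤ b) (hb' : b ≤ D) :
    0 ≤ 2 * (D + 2 * K - 3) * (a + K) * (b + K)
      - (K + 1) * (a + b + 2 * K) * (a + b + 2 * K - 4) := by
  rcases (ha.trans ha').eq_or_lt with rfl | hD
  · obtain rfl : a = 1 := by linarith
    obtain rfl : b = 1 := by linarith
    ring_nf; rfl
  -- corner values at (1,1), (1,D), (D,1), (D,D), then the concavity correction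
  have interpolation : (D - 1) ^ 2 * (2 * (D + 2 * K - 3) * (a + K) * (b + K)
        - (K + 1) * (a + b + 2 * K) * (a + b + 2 * K - 4))
      = 2 * (K + 1) * (K + 1) * (D - 1) * ((D - a) * (D - b))
        + (K + 1) * (D + 2 * K - 3) * (D - 1) * ((D - a) * (b - 1) + (a - 1) * (D - b))
        + 2 * (D + K) * (D + K - 4) * (D - 1) * ((a - 1) * (b - 1))
        + (K + 1) * (D - 1) * (D - 1) * ((a - 1) * (D - a) + (b - 1) * (D - b)) := by
    ring
  have hDa : 0 ≤ D - a := by linarith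
  have hDb : 0 ≤ D - b := by linarith
  have ha1 : 0 ≤ a - 1 := by linarith
  have hb1 : 0 ≤ b - 1 := by linarith
  have hK1 : 0 ≤ K + 1 := by linarith
  have hD1 : 0 ≤ D - 1 := by linarith
  have hDK : 0 ≤ D + 2 * K - 3 := by linarith
  have hDK' : 0 ≤ D + K := by linarith
  have hDK4 : 0 ≤ D + K - 4 := by linarith
  refine nonneg_of_mul_nonneg_right (a := (D - 1) ^ 2) ?_ (by positivity)
  rw [interpolation]
  apply_rules (maxDepth := 100) [add_nonneg, mul_nonneg, zero_le_two]

theorem mul_one_div_add_one_div_le {K D a b : ℝ} (hK : 3 ≤ K) (ha : 1 ≤ a) (ha' : a ≤ D)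
    (hb : 1 ≤ b) (hb' : b ≤ D) :
    (K + 1) / (2 * (D + 2 * K - 3)) * (1 / (a + K) + 1 / (b + K))
      ≤ 1 / (a + b + 2 * K - 4) := by
  have haK : 0 < a + K := by linarith
  have hbK : 0 < b + K := by linarith
  rw [div_add_div _ _ haK.ne' hbK.ne', div_mul_div_comm,
    div_le_div_iff₀ (mul_pos (by linarith [ha.trans ha']) (mul_pos haK hbK)) (by linarith)]
  linear_combination polynomial_nonneg_on_box hK ha ha' hb hb'

theorem stmt1_general (k Δ : ℕ) (hk : 3 ≤ k) (x : Fin k → ℝ)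
    (hx : ∀ j, 1 ≤ x j ∧ x j ≤ (Δ : ℝ)) :
    ∑ j, 1 / (x j + (k : ℝ))
      ≤ 2 * ((Δ : ℝ) + 2 * (k : ℝ) - 3) / ((k : ℝ) ^ 2 - 1) *
        ∑ p ∈ Finset.univ.filter (fun p : Fin k × Fin k => p.1 < p.2),
          1 / (x p.1 + x p.2 + 2 * (k : ℝ) - 4) := by
  have hk' : (3 : ℝ) ≤ k := by exact_mod_cast hk
  have hΔk : 0 < (Δ : ℝ) + 2 * k - 3 := by linarith [Nat.cast_nonneg (α := ℝ) Δ]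
  have hk2 : 0 < (k : ℝ) ^ 2 - 1 := by nlinarith
  calc ∑ j, 1 / (x j + (k : ℝ))
      = 2 * ((Δ : ℝ) + 2 * k - 3) / ((k : ℝ) ^ 2 - 1) *
          ((k + 1) / (2 * (Δ + 2 * k - 3)) * ((k - 1) * ∑ j, 1 / (x j + (k : ℝ)))) := by
        generalize ∑ j, 1 / (x j + (k : ℝ)) = S
        field_simp
        ring
    _ = 2 * ((Δ : ℝ) + 2 * k - 3) / ((k : ℝ) ^ 2 - 1) *
          ∑ p ∈ univ.filter (fun p : Fin k × Fin k => p.1 < p.2),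
            (k + 1) / (2 * (Δ + 2 * k - 3)) * (1 / (x p.1 + k) + 1 / (x p.2 + k)) := by
        rw [← mul_sum, sum_filter_lt_add (fun j => 1 / (x j + (k : ℝ))), Fintype.card_fin,
          nsmul_eq_mul, Nat.cast_pred (by omega)]
    _ ≤ _ := by
        gcongr with p
        exact mul_one_div_add_one_div_le hk' (hx p.1).1 (hx p.1).2 (hx p.2).1 (hx p.2).2

theorem stmt1 (k Δ : ℕ) (hk : 3 ≤ k) (hkΔ : k ≤ Δ) (x : Fin k → ℝ)
    (hx : ∀ j, 1 ≤ x j ∧ x j ≤ (Δ : ℝ)) :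
    ∑ j, 1 / (x j + (k : ℝ))
      ≤ 2 * ((Δ : ℝ) + 2 * (k : ℝ) - 3) / ((k : ℝ) ^ 2 - 1) *
        ∑ p ∈ Finset.univ.filter (fun p : Fin k × Fin k => p.1 < p.2),
          1 / (x p.1 + x p.2 + 2 * (k : ℝ) - 4) :=
  stmt1_general k Δ hk x hx
end

section
/- For any positive integers k and Δ with 3 ≤ k ≤ Δ, and any real numbers x_1, ..., x_k with 1 ≤ x_j ≤ Δ for all j, we have Σ_{j=1}^k 1/(x_j + k) ≤ ((Δ + 3)/4) · Σ_{1≤i<j≤k} 1/(x_i + x_j + 2k - 4). -/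
/-!
Every summand on the left occurs in exactly `k - 1` of the sums `1/(x_i + k) + 1/(x_j + k)` over
pairs `i < j`, so it suffices to bound each such pair sum by `(Δ + 3)(k - 1)/4 · 1/(x_i + x_j + 2k - 4)`.
Clearing denominators, this pair bound is a polynomial inequality in `a = x_i + k` and
`b = x_j + k` which is concave in each variable separately, hence needs checking only at the
corners of the box `[k + 1, Δ + k]²`.
-/

open Finset

theorem Fin.sum_filter_lt_add_eq_nsmul {M : Type*} [AddCommMonoid M] (n : ℕ) (f : Fin n → M) :
    ∑ p ∈ univ.filter (fun p : Fin n × Fin n => p.1 < p.2), (f p.1 + f p.2)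
      = (n - 1) • ∑ i, f i := by
  rw [sum_filter, Fintype.sum_prod_type]
  have hsplit : ∀ i j : Fin n, (if i < j then f i + f j else 0)
      = (if i < j then f i else 0) + (if i < j then f j else 0) := fun i j => by
    split_ifs <;> simp
  simp_rw [hsplit, sum_add_distrib]
  have hright : ∀ i : Fin n, (∑ j, if i < j then f i else 0) = (n - 1 - i) • f i := fun i => by
    rw [← sum_filter, Finset.sum_const, filter_lt_eq_Ioi, Fin.card_Ioi]
  have hleft : (∑ i, ∑ j : Fin n, if i < j then f j else 0) = ∑ j : Fin n, (j : ℕ) • f j := by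
    rw [sum_comm]
    refine sum_congr rfl fun j _ => ?_
    rw [← sum_filter, Finset.sum_const, filter_gt_eq_Iio, Fin.card_Iio]
  rw [hleft, ← sum_add_distrib, smul_sum]
  refine sum_congr rfl fun i _ => ?_
  rw [hright, ← add_nsmul]
  congr 1
  omega

theorem quadratic_nonneg_of_nonneg_endpoints {a b c m M t : ℝ} (ha : a ≤ 0) (hmt : m ≤ t)
    (htM : t ≤ M) (hm : 0 ≤ a * m ^ 2 + b * m + c) (hM : 0 ≤ a * M ^ 2 + b * M + c) :
    0 ≤ a * t ^ 2 + b * t + c := by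
  rcases (hmt.trans htM).eq_or_lt with rfl | hlt
  · rwa [le_antisymm htM hmt]
  -- linear interpolation between the endpoints, plus the concavity defect
  have hinterp : (M - m) * (a * t ^ 2 + b * t + c)
      = (M - t) * (a * m ^ 2 + b * m + c) + (t - m) * (a * M ^ 2 + b * M + c)
        + (-a) * (M - m) * ((t - m) * (M - t)) := by ring
  refine nonneg_of_mul_nonneg_right (a := M - m) ?_ (sub_pos.2 hlt)
  rw [hinterp]
  have := sub_nonneg.2 hmt
  have := sub_nonneg.2 htM
  have := sub_pos.2 hlt
  have := neg_nonneg.2 ha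
  positivity

theorem add_mul_add_sub_four_le_of_mem_Icc {D K a b : ℝ} (hK : 3 ≤ K) (hKD : K ≤ D)
    (ha : a ∈ Set.Icc (K + 1) (D + K)) (hb : b ∈ Set.Icc (K + 1) (D + K)) :
    4 * (a + b) * (a + b - 4) ≤ (D + 3) * (K - 1) * (a * b) := by
  set φ : ℝ → ℝ → ℝ := fun a b => (D + 3) * (K - 1) * (a * b) - 4 * (a + b) * (a + b - 4)
  have hφ_quad : ∀ a b, φ a b
      = -4 * a ^ 2 + ((D + 3) * (K - 1) * b - 8 * b + 16) * a + (16 * b - 4 * b ^ 2) :=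
    fun a b => by ring
  have hφ_symm : ∀ a b, φ a b = φ b a := fun a b => by ring
  have hφ_concave : ∀ a b, a ∈ Set.Icc (K + 1) (D + K) →
      0 ≤ φ (K + 1) b → 0 ≤ φ (D + K) b → 0 ≤ φ a b := by
    rintro a b ⟨hlo, hhi⟩ hm hM
    rw [hφ_quad] at hm hM ⊢
    exact quadratic_nonneg_of_nonneg_endpoints (by norm_num) hlo hhi hm hM
  have hK3 := sub_nonneg.2 hK
  have hDK := sub_nonneg.2 hKD
  have hmm : 0 ≤ φ (K + 1) (K + 1) := by
    nlinarith [mul_nonneg hK3 hDK, sq_nonneg (K - 3), sq_nonneg (D - K)]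
  have hmM : 0 ≤ φ (K + 1) (D + K) := by
    nlinarith [mul_nonneg hK3 hDK, sq_nonneg (K - 3), sq_nonneg (D - K), sq_nonneg (D - 1),
      mul_nonneg hK3 hK3]
  have hMM : 0 ≤ φ (D + K) (D + K) := by
    nlinarith [mul_nonneg hK3 hDK, sq_nonneg (D - 1), sq_nonneg (D - K), mul_nonneg hK3 hK3]
  have hm_b : 0 ≤ φ (K + 1) b := by
    rw [hφ_symm]
    exact hφ_concave b _ hb hmm (by rwa [hφ_symm])
  have hM_b : 0 ≤ φ (D + K) b := by
    rw [hφ_symm]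
    exact hφ_concave b _ hb hmM hMM
  exact sub_nonneg.1 (hφ_concave a b ha hm_b hM_b)

theorem one_div_add_one_div_le_of_mem_Icc {D K x y : ℝ} (hK : 3 ≤ K) (hKD : K ≤ D)
    (hx : x ∈ Set.Icc 1 D) (hy : y ∈ Set.Icc 1 D) :
    1 / (x + K) + 1 / (y + K) ≤ (D + 3) * (K - 1) / 4 * (1 / (x + y + 2 * K - 4)) := by
  obtain ⟨hx1, hxD⟩ := hx
  obtain ⟨hy1, hyD⟩ := hy
  have hpoly := add_mul_add_sub_four_le_of_mem_Icc (a := x + K) (b := y + K) hK hKD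
    ⟨by linarith, by linarith⟩ ⟨by linarith, by linarith⟩
  rw [div_add_div _ _ (by linarith) (by linarith), div_mul_div_comm,
    div_le_div_iff₀ (by nlinarith) (by nlinarith)]
  nlinarith

theorem stmt2 (k Δ : ℕ) (hk : 3 ≤ k) (hkΔ : k ≤ Δ) (x : Fin k → ℝ)
    (hx : ∀ j, 1 ≤ x j ∧ x j ≤ (Δ : ℝ)) :
    ∑ j, 1 / (x j + (k : ℝ))
      ≤ ((Δ : ℝ) + 3) / 4 *
        ∑ p ∈ Finset.univ.filter (fun p : Fin k × Fin k => p.1 < p.2),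
          1 / (x p.1 + x p.2 + 2 * (k : ℝ) - 4) := by
  have hK : (3 : ℝ) ≤ k := by exact_mod_cast hk
  have hKD : (k : ℝ) ≤ Δ := by exact_mod_cast hkΔ
  set P := univ.filter (fun p : Fin k × Fin k => p.1 < p.2)
  set f : Fin k → ℝ := fun j => 1 / (x j + k)
  have hpairs : ∑ p ∈ P, (f p.1 + f p.2) = ((k : ℝ) - 1) * ∑ j, f j := by
    rw [Fin.sum_filter_lt_add_eq_nsmul, nsmul_eq_mul, Nat.cast_sub (by omega), Nat.cast_one]
  refine le_of_mul_le_mul_left ?_ (by linarith : (0 : ℝ) < k - 1)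
  calc ((k : ℝ) - 1) * ∑ j, f j
      = ∑ p ∈ P, (f p.1 + f p.2) := hpairs.symm
    _ ≤ ∑ p ∈ P, ((Δ : ℝ) + 3) * (k - 1) / 4 * (1 / (x p.1 + x p.2 + 2 * k - 4)) :=
        sum_le_sum fun p _ => one_div_add_one_div_le_of_mem_Icc hK hKD (hx p.1) (hx p.2)
    _ = ((k : ℝ) - 1) * (((Δ : ℝ) + 3) / 4 * ∑ p ∈ P, 1 / (x p.1 + x p.2 + 2 * (k : ℝ) - 4)) := by
        rw [mul_sum, mul_sum]
        exact sum_congr rfl fun p _ => by ring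
end

section
/- If G is a finite simple graph with n vertices (each vertex having degree at least 1), then the harmonic index satisfies H(G) ≤ n/2, with equality if and only if every connected component of G is regular. -/
noncomputable def harmonicIndex {V : Type*} [Fintype V] [DecidableEq V]
    (G : SimpleGraph V) [DecidableRel G.Adj] : ℝ :=
  ∑ e ∈ G.edgeFinset,
    Sym2.lift ⟨fun u v => 2 / ((G.degree u : ℝ) + (G.degree v : ℝ)),
      fun u v => by dsimp only; rw [add_comm ((G.degree u : ℝ))]⟩ e

/-!
Counting each edge `uv` as the two darts `(u, v)` and `(v, u)` gives
`2 H(G) = ∑_{(u,v)} 2 / (d_u + d_v)`. By the harmonic–arithmetic mean inequality each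
term is at most `(1/d_u + 1/d_v) / 2`, and these bounds sum to `∑_v d_v · (1/d_v) = n`.
Equality holds exactly when `d_u = d_v` along every edge, i.e. when the degree is constant
on each connected component.
-/

open Finset

namespace SimpleGraph

section Darts

variable {V M : Type*} [Fintype V] [DecidableEq V] (G : SimpleGraph V) [DecidableRel G.Adj]
  [AddCommMonoid M]

theorem sum_dart_edge (f : Sym2 V → M) :
    ∑ d : G.Dart, f d.edge = 2 • ∑ e ∈ G.edgeFinset, f e := by
  rw [← sum_fiberwise_of_maps_to' (fun d _ => G.mem_edgeFinset.2 d.edge_mem), smul_sum]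
  refine sum_congr rfl fun e he => ?_
  rw [sum_const, G.dart_edge_fiber_card e (G.mem_edgeFinset.1 he)]

theorem sum_dart_fst (f : V → M) :
    ∑ d : G.Dart, f d.fst = ∑ v, G.degree v • f v := by
  rw [← sum_fiberwise' univ (fun d : G.Dart => d.fst) f]
  simp_rw [sum_const, G.dart_fst_fiber_card_eq_degree]

omit [DecidableEq V] in
theorem sum_dart_snd (f : V → M) :
    ∑ d : G.Dart, f d.snd = ∑ d : G.Dart, f d.fst :=
  Fintype.sum_equiv (Dart.symm_involutive.toPerm _) _ _ fun _ => rfl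

end Darts

section HarmonicIndex

variable {V : Type*} [Fintype V] [DecidableEq V] (G : SimpleGraph V) [DecidableRel G.Adj]

theorem two_mul_harmonicIndex :
    2 * harmonicIndex G = ∑ d : G.Dart, 2 / ((G.degree d.fst : ℝ) + G.degree d.snd) := by
  rw [harmonicIndex, two_mul, ← two_nsmul, ← sum_dart_edge]
  rfl

omit [DecidableEq V] in
theorem sum_dart_inv_degree_fst (hdeg : ∀ v, 0 < G.degree v) :
    ∑ d : G.Dart, (G.degree d.fst : ℝ)⁻¹ = Fintype.card V := by
  classical
  rw [sum_dart_fst G fun v => (G.degree v : ℝ)⁻¹]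
  simp [nsmul_eq_mul, (hdeg _).ne']

end HarmonicIndex

theorem Reachable.eq_of_forall_adj_eq {V α : Type*} {G : SimpleGraph V} {f : V → α}
    (hf : ∀ u v, G.Adj u v → f u = f v) {u v : V} (h : G.Reachable u v) : f u = f v := by
  obtain ⟨p⟩ := h
  induction p with
  | nil => rfl
  | cons hadj _ ih => exact (hf _ _ hadj).trans ih

theorem forall_adj_eq_iff_forall_connectedComponent {V α : Type*} (G : SimpleGraph V)
    (f : V → α) :
    (∀ u v, G.Adj u v → f u = f v) ↔
      ∀ c : G.ConnectedComponent, ∃ r, ∀ v, G.connectedComponentMk v = c → f v = r := by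
  refine ⟨fun hf c => ?_, fun h u v huv => ?_⟩
  · obtain ⟨w, rfl⟩ := c.exists_rep
    exact ⟨f w, fun v hv => (ConnectedComponent.eq.1 hv).eq_of_forall_adj_eq hf⟩
  · obtain ⟨r, hr⟩ := h (G.connectedComponentMk u)
    rw [hr u rfl, hr v (ConnectedComponent.eq.2 huv.reachable.symm)]

end SimpleGraph

theorem two_div_add_le_inv_add_inv_div_two {a b : ℝ} (ha : 0 < a) (hb : 0 < b) :
    2 / (a + b) ≤ (a⁻¹ + b⁻¹) / 2 := by
  rw [inv_add_inv ha.ne' hb.ne', div_div, div_le_div_iff₀ (by positivity) (by positivity)]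
  nlinarith [sq_nonneg (a - b)]

theorem two_div_add_eq_inv_add_inv_div_two_iff {a b : ℝ} (ha : 0 < a) (hb : 0 < b) :
    2 / (a + b) = (a⁻¹ + b⁻¹) / 2 ↔ a = b := by
  rw [inv_add_inv ha.ne' hb.ne', div_div, div_eq_div_iff (by positivity) (by positivity)]
  constructor
  · intro h
    nlinarith [sq_nonneg (a - b)]
  · rintro rfl
    ring

open SimpleGraph in
theorem stmt8 {V : Type*} [Fintype V] [DecidableEq V] (G : SimpleGraph V)
    [DecidableRel G.Adj] (hdeg : ∀ v : V, 1 ≤ G.degree v) :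
    harmonicIndex G ≤ (Fintype.card V : ℝ) / 2 ∧
    (harmonicIndex G = (Fintype.card V : ℝ) / 2 ↔
      ∀ c : G.ConnectedComponent, ∃ r : ℕ, ∀ v : V,
        G.connectedComponentMk v = c → G.degree v = r) := by
  have hpos (v : V) : (0 : ℝ) < G.degree v := by exact_mod_cast hdeg v
  have hupper : ∑ d : G.Dart, ((G.degree d.fst : ℝ)⁻¹ + (G.degree d.snd : ℝ)⁻¹) / 2
      = Fintype.card V := by
    rw [← sum_div, sum_add_distrib, sum_dart_snd G fun v => (G.degree v : ℝ)⁻¹,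
      sum_dart_inv_degree_fst G hdeg]
    ring
  have hle (d : G.Dart) := two_div_add_le_inv_add_inv_div_two (hpos d.fst) (hpos d.snd)
  have hH := two_mul_harmonicIndex G
  refine ⟨by linarith [sum_le_sum fun d (_ : d ∈ univ) => hle d], ?_⟩
  rw [← forall_adj_eq_iff_forall_connectedComponent]
  calc harmonicIndex G = Fintype.card V / 2
      ↔ ∑ d : G.Dart, 2 / ((G.degree d.fst : ℝ) + G.degree d.snd)
        = ∑ d : G.Dart, ((G.degree d.fst : ℝ)⁻¹ + (G.degree d.snd : ℝ)⁻¹) / 2 := by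
        constructor <;> intro h <;> linarith
    _ ↔ ∀ d : G.Dart, G.degree d.fst = G.degree d.snd := by
        simp only [sum_eq_sum_iff_of_le fun d _ => hle d, mem_univ, true_imp_iff,
          two_div_add_eq_inv_add_inv_div_two_iff (hpos _) (hpos _), Nat.cast_inj]
    _ ↔ ∀ u v, G.Adj u v → G.degree u = G.degree v :=
        ⟨fun h u v huv => h ⟨(u, v), huv⟩, fun h d => h _ _ d.adj⟩
end
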